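/- arXiv:1512.08476 — 3 statements merged into one kernel-verified Lean document; each statement's English description precedes it below -/
import Mathlib

section
/- Let 𝐓 : ℝ² → ℂ be a continuous function vanishing at infinity, and suppose there exist continuous functions p, q : ℝ → ℝ vanishing at infinity and square-integrable over ℝ such that |𝐓(s,t)| ≤ p(s)q(t) for all s, t ∈ ℝ. Then 𝐓 is a K⁰-kernel; in particular, the Carleman functions 𝐭(s) = conj(𝐓(s,·)) and 𝐭′(s) = 𝐓(·,s) it induces are both continuous maps from ℝ into L² that vanish at infinity in L²-norm. -/
open MeasureTheory Filter Topology ContinuousLinearMap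
open scoped ENNReal NNReal

noncomputable section

/-- `L²(ℝ)`, the complex Hilbert space of square-integrable functions on `ℝ`. -/
abbrev L2 : Type := MeasureTheory.Lp ℂ 2 (MeasureTheory.volume : MeasureTheory.Measure ℝ)

/-- Bounded linear operators on `L²`. -/
abbrev L2op : Type := L2 →L[ℂ] L2

/-- `T` is the integral operator induced by the kernel `K`:
`(Tf)(s) = ∫ K(s,t) f(t) dt` for every `f ∈ L²` and almost every `s`. -/
def IsInducedBy (T : L2op) (K : ℝ → ℝ → ℂ) : Prop :=
  ∀ f : L2, ∀ᵐ s : ℝ, (T f : ℝ → ℂ) s = ∫ t : ℝ, K s t * (f : ℝ → ℂ) t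

/-- `K` is a `K⁰`-kernel with associated Carleman functions `kt`, `kt'`:
`kt s = conj (K s ·)` and `kt' s = K · s` as elements of `L²`, the kernel is
continuous and vanishes at infinity, and both Carleman functions are continuous
and vanish at infinity in `L²`-norm. -/
structure IsK0Kernel (K : ℝ → ℝ → ℂ) (kt kt' : ℝ → L2) : Prop where
  repr_t : ∀ s : ℝ, (kt s : ℝ → ℂ) =ᵐ[volume] fun x => (starRingEnd ℂ) (K s x)
  repr_t' : ∀ s : ℝ, (kt' s : ℝ → ℂ) =ᵐ[volume] fun x => K x s
  cont : Continuous fun p : ℝ × ℝ => K p.1 p.2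
  vanish : Tendsto (fun p : ℝ × ℝ => K p.1 p.2) (cocompact (ℝ × ℝ)) (𝓝 0)
  cont_t : Continuous kt
  vanish_t : Tendsto kt (cocompact ℝ) (𝓝 0)
  cont_t' : Continuous kt'
  vanish_t' : Tendsto kt' (cocompact ℝ) (𝓝 0)

/-- The set `Π(T)` of regular values of `T`: those `λ` for which `I - λT` is invertible. -/
def regularSet (T : L2op) : Set ℂ := {lam : ℂ | IsUnit (1 - lam • T)}

/-- The resolvent `R_λ(T) = (I - λT)⁻¹` (junk value `0` if `λ ∉ Π(T)`). -/
def res (T : L2op) (lam : ℂ) : L2op := Ring.inverse (1 - lam • T)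

/-- The Fredholm resolvent `T_{|λ} = T R_λ(T)`. -/
def fres (T : L2op) (lam : ℂ) : L2op := T * res T lam

/-- The region of boundedness `∇_b({Sₙ})`. -/
def nablaB (S : ℕ → L2op) : Set ℂ :=
  {ζ : ℂ | ζ ≠ 0 ∧ ∃ M : ℝ, 0 < M ∧ ∃ N : ℕ, ∀ n > N,
      ζ ∈ regularSet (S n) ∧ ‖fres (S n) ζ‖ ≤ M}

/-- The region of strong convergence `∇_s({Sₙ})`: the `ζ ∈ ∇_b({Sₙ})` such that
the Fredholm resolvents `S_{n|ζ}` converge in the strong operator topology. -/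
def nablaS (S : ℕ → L2op) : Set ℂ :=
  {ζ : ℂ | ζ ∈ nablaB S ∧
    ∀ f : L2, ∃ g : L2, Tendsto (fun n => fres (S n) ζ f) atTop (𝓝 g)}

/-- Nuclear (trace class) operator on `L²`. -/
def IsNuclear (T : L2op) : Prop :=
  ∃ g h : ℕ → L2, Summable (fun k => ‖g k‖ * ‖h k‖) ∧
    ∀ f : L2, T f = ∑' k : ℕ, (inner ℂ f (g k) : ℂ) • h k

/-- The characteristic function `χ` of the interval `(-τ, τ)`, with complex values. -/
def chi (t : ℝ) (x : ℝ) : ℂ := Set.indicator (Set.Ioo (-t) t) 1 x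

/-- Condition (iv) for a `K⁰`-kernel `K` inducing `T`: the positive reals `τ n`
strictly increase to `+∞`, `P n` is the orthogonal projection given by multiplication
by `χₙ = chi (τ n)`, the subkernels `Kₙ(s,t) = χₙ(s)K(s,t)` and
`K̃ₙ(s,t) = χₙ(s)K(s,t)χₙ(t)` are `K⁰`-kernels, and the induced operators
`Tₙ = PₙT` and `T̃ₙ = PₙTPₙ` are nuclear. -/
structure ConditionIV (K : ℝ → ℝ → ℂ) (T : L2op) (tau : ℕ → ℝ) (P : ℕ → L2op) : Prop where
  pos : ∀ n, 0 < tau n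
  mono : StrictMono tau
  tendsto_top : Tendsto tau atTop atTop
  proj : ∀ n, ∀ f : L2, (P n f : ℝ → ℂ) =ᵐ[volume] fun x => chi (tau n) x * (f : ℝ → ℂ) x
  subker : ∀ n, ∃ kt kt' : ℝ → L2, IsK0Kernel (fun s t => chi (tau n) s * K s t) kt kt'
  subker' : ∀ n, ∃ kt kt' : ℝ → L2,
      IsK0Kernel (fun s t => chi (tau n) s * K s t * chi (tau n) t) kt kt'
  nuclear : ∀ n, IsNuclear (P n * T)
  nuclear' : ∀ n, IsNuclear (P n * T * P n)

/-- `λₙ(λ) = λ(1 - βₙλ)⁻¹`. -/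
def lamn (b : ℕ → ℂ) (lam : ℂ) (n : ℕ) : ℂ := lam * (1 - b n * lam)⁻¹

/-- The resolvent kernel for `K` at `λ` built from the resolvent Carleman function
`𝐭'_{|λ}(t) = R_λ(T)(kt' t)`:  `𝐓_{|λ}(s,t) = λ⟨𝐭'_{|λ}(t), 𝐭(s)⟩ + 𝐓(s,t)`
(the paper's inner product `⟨a,b⟩ = ∫ a conj b` is `inner b a` in Mathlib). -/
def resKer (T : L2op) (K : ℝ → ℝ → ℂ) (kt kt' : ℝ → L2) (lam : ℂ) (s t : ℝ) : ℂ :=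
  lam * (inner ℂ (kt s) (res T lam (kt' t)) : ℂ) + K s t

/-- The resolvent kernel for the subkernel `Kₙ` at `λ`:
`𝐓_{n|λ}(s,t) = λ χₙ(s) ⟨𝐭'_{n|λ}(t), 𝐭(s)⟩ + 𝐓ₙ(s,t)`, where
`𝐭'_{n|λ}(t) = R_λ(Tₙ) Pₙ (kt' t)` and `𝐓ₙ(s,t) = χₙ(s) 𝐓(s,t)`. -/
def resKerN (T : L2op) (K : ℝ → ℝ → ℂ) (kt kt' : ℝ → L2) (taun : ℝ) (Pn : L2op)
    (lam : ℂ) (s t : ℝ) : ℂ :=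
  lam * chi taun s * (inner ℂ (kt s) (res (Pn * T) lam (Pn (kt' t))) : ℂ) + chi taun s * K s t

/-- `R` is a resolvent kernel for the `K⁰`-kernel `K` at `λ` (Definition 2 of the paper):
`R` is a `K⁰`-kernel satisfying the two simultaneous integral equations and the
square-integrability condition. -/
def IsResolventKernel (K : ℝ → ℝ → ℂ) (lam : ℂ) (R : ℝ → ℝ → ℂ) : Prop :=
  (∃ rt rt' : ℝ → L2, IsK0Kernel R rt rt') ∧
  (∀ s t : ℝ, R s t - lam * ∫ x : ℝ, K s x * R x t = K s t) ∧
  (∀ s t : ℝ, R s t - lam * ∫ x : ℝ, R s x * K x t = K s t) ∧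
  (∀ f : L2, ∫⁻ s : ℝ, ((‖∫ t : ℝ, R s t * (f : ℝ → ℂ) t‖₊ : ℝ≥0) : ℝ≥0∞) ^ 2 < ⊤)

/-!
The rows `𝐓(s,·)` and columns `𝐓(·,t)` are dominated by `|p(s)|·|q|` and `|q(t)|·|p|`. Hence
each lies in `L²`, with norm at most `|p(s)|‖q‖₂` (resp. `|q(t)|‖p‖₂`), which vanishes at
infinity. Continuity in `L²` follows from dominated convergence, because `p` and `q` are
locally bounded.
-/

section DominatedLp

variable {α E : Type*} [MeasurableSpace α] {μ : Measure α} [NormedAddCommGroup E]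
  {p : ℝ≥0∞} {g : α → ℝ}

theorem tendsto_eLpNorm_zero_of_dominated {ι : Type*} {l : Filter ι} [l.IsCountablyGenerated]
    {F : ι → α → E} (hp : p ≠ 0) (hp' : p ≠ ∞)
    (hF_meas : ∀ᶠ i in l, AEStronglyMeasurable (F i) μ) (hg : MemLp g p μ)
    (h_bound : ∀ᶠ i in l, ∀ᵐ a ∂μ, ‖F i a‖ ≤ g a)
    (h_lim : ∀ᵐ a ∂μ, Tendsto (fun i => F i a) l (𝓝 0)) :
    Tendsto (fun i => eLpNorm (F i) p μ) l (𝓝 0) := by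
  have hp_pos : 0 < p.toReal := ENNReal.toReal_pos hp hp'
  have h_int : Tendsto (fun i => ∫⁻ a, ‖F i a‖ₑ ^ p.toReal ∂μ) l (𝓝 0) := by
    have := tendsto_lintegral_filter_of_dominated_convergence' (fun a => ‖g a‖ₑ ^ p.toReal)
      (hF_meas.mono fun i hi => hi.enorm.pow_const _)
      (h_bound.mono fun i hi => hi.mono fun a ha => by
        gcongr; exact enorm_le_iff_norm_le.mpr (ha.trans (Real.le_norm_self _)))
      (lintegral_rpow_enorm_lt_top_of_eLpNorm_lt_top hp hp' hg.2).ne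
      (h_lim.mono fun a ha => (ENNReal.continuous_rpow_const.tendsto _).comp
        (continuous_enorm.tendsto _ |>.comp ha))
    simpa [ENNReal.zero_rpow_of_pos hp_pos] using this
  simp only [eLpNorm_eq_lintegral_rpow_enorm_toReal hp hp']
  simpa [hp_pos, Function.comp_def] using
    (ENNReal.continuous_rpow_const (y := 1 / p.toReal)).tendsto 0 |>.comp h_int

variable {X : Type*} {F : X → α → E} {u : X → ℝ}

theorem continuous_toLp_of_dominated [TopologicalSpace X] [FirstCountableTopology X]
    [Fact (1 ≤ p)] (hp : p ≠ ∞) (hF : ∀ x, MemLp (F x) p μ)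
    (hF_cont : ∀ a, Continuous fun x => F x a) (hu : Continuous u) (hg : MemLp g p μ)
    (h_bound : ∀ x a, ‖F x a‖ ≤ u x * ‖g a‖) :
    Continuous fun x => (hF x).toLp (F x) := by
  refine continuous_iff_continuousAt.2 fun x₀ => ?_
  rw [ContinuousAt, tendsto_iff_norm_sub_tendsto_zero]
  simp_rw [← MemLp.toLp_sub, Lp.norm_toLp]
  have h_near : ∀ᶠ x in 𝓝 x₀, u x < u x₀ + 1 :=
    hu.continuousAt.eventually (gt_mem_nhds (lt_add_one _))
  have h_dom : ∀ᶠ x in 𝓝 x₀, ∀ᵐ a ∂μ, ‖(F x - F x₀) a‖ ≤ (u x₀ + 1 + u x₀) * ‖g a‖ := by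
    filter_upwards [h_near] with x hx
    refine ae_of_all _ fun a => ?_
    calc ‖(F x - F x₀) a‖ ≤ ‖F x a‖ + ‖F x₀ a‖ := norm_sub_le _ _
      _ ≤ u x * ‖g a‖ + u x₀ * ‖g a‖ := add_le_add (h_bound x a) (h_bound x₀ a)
      _ ≤ (u x₀ + 1 + u x₀) * ‖g a‖ := by rw [← add_mul]; gcongr
  have h_lim : ∀ᵐ a ∂μ, Tendsto (fun x => (F x - F x₀) a) (𝓝 x₀) (𝓝 0) :=
    ae_of_all _ fun a => by
      simpa using ((hF_cont a).tendsto x₀).sub_const (F x₀ a)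
  have := tendsto_eLpNorm_zero_of_dominated (one_pos.trans_le Fact.out).ne' hp
    (Eventually.of_forall fun x => ((hF x).sub (hF x₀)).1) (hg.norm.const_mul _) h_dom h_lim
  exact (ENNReal.tendsto_toReal ENNReal.zero_ne_top).comp this

theorem tendsto_toLp_zero_of_dominated [Fact (1 ≤ p)] {l : Filter X} (hF : ∀ x, MemLp (F x) p μ)
    (hu : Tendsto u l (𝓝 0)) (hg : MemLp g p μ) (h_bound : ∀ x a, ‖F x a‖ ≤ u x * ‖g a‖) :
    Tendsto (fun x => (hF x).toLp (F x)) l (𝓝 0) := by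
  have h_norm : ∀ x, ‖(hF x).toLp (F x)‖ ≤ u x * ‖hg.toLp g‖ := fun x =>
    Lp.norm_le_mul_norm_of_ae_le_mul <| by
      filter_upwards [(hF x).coeFn_toLp, hg.coeFn_toLp] with a hFa hga
      rw [hFa, hga]
      exact h_bound x a
  refine tendsto_zero_iff_norm_tendsto_zero.2 <|
    squeeze_zero (fun x => norm_nonneg _) h_norm ?_
  simpa using hu.mul_const ‖hg.toLp g‖

end DominatedLp

theorem exists_continuous_carleman_function (F : ℝ → ℝ → ℂ)
    (hF : Continuous fun p : ℝ × ℝ => F p.1 p.2) (u g : ℝ → ℝ) (hu : Continuous u)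
    (hu_vanish : Tendsto u (cocompact ℝ) (𝓝 0)) (hg : MemLp g 2 (volume : Measure ℝ))
    (h_bound : ∀ s t, ‖F s t‖ ≤ u s * ‖g t‖) :
    ∃ k : ℝ → L2, (∀ s, (k s : ℝ → ℂ) =ᵐ[volume] F s) ∧ Continuous k ∧
      Tendsto k (cocompact ℝ) (𝓝 0) := by
  have hF_cont : ∀ s, Continuous (F s) := fun s => hF.comp (Continuous.prodMk_right s)
  have hF_mem : ∀ s, MemLp (F s) 2 (volume : Measure ℝ) := fun s =>
    hg.of_le_mul (hF_cont s).aestronglyMeasurable (ae_of_all _ (h_bound s))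
  exact ⟨fun s => (hF_mem s).toLp _, fun s => (hF_mem s).coeFn_toLp,
    continuous_toLp_of_dominated ENNReal.ofNat_ne_top hF_mem
      (fun t => hF.comp (Continuous.prodMk_left t)) hu hg h_bound,
    tendsto_toLp_zero_of_dominated hF_mem hu_vanish hg h_bound⟩

theorem statement14 (K : ℝ → ℝ → ℂ)
    (hc : Continuous fun p : ℝ × ℝ => K p.1 p.2)
    (hv : Tendsto (fun p : ℝ × ℝ => K p.1 p.2) (cocompact (ℝ × ℝ)) (𝓝 0))
    (p q : ℝ → ℝ) (hpc : Continuous p) (hqc : Continuous q)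
    (hpv : Tendsto p (cocompact ℝ) (𝓝 0)) (hqv : Tendsto q (cocompact ℝ) (𝓝 0))
    (hp2 : MemLp p 2 (volume : Measure ℝ)) (hq2 : MemLp q 2 (volume : Measure ℝ))
    (hbound : ∀ s t : ℝ, ‖K s t‖ ≤ p s * q t) :
    ∃ kt kt' : ℝ → L2, IsK0Kernel K kt kt' := by
  have h_abs : ∀ s t, ‖K s t‖ ≤ |p s| * |q t| := fun s t =>
    (hbound s t).trans ((le_abs_self _).trans_eq (abs_mul _ _))
  obtain ⟨kt, hkt, hkt_cont, hkt_vanish⟩ := exists_continuous_carleman_function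
    (fun s t => starRingEnd ℂ (K s t)) (continuous_star.comp hc) (fun s => |p s|) q
    hpc.abs (by simpa using hpv.abs) hq2 fun s t => by simpa using h_abs s t
  obtain ⟨kt', hkt', hkt'_cont, hkt'_vanish⟩ := exists_continuous_carleman_function
    (fun s t => K t s) (hc.comp continuous_swap) (fun s => |q s|) p
    hqc.abs (by simpa using hqv.abs) hp2 fun s t => by simpa [mul_comm] using h_abs t s
  exact ⟨kt, kt', ⟨hkt, hkt', hc, hv, hkt_cont, hkt_vanish, hkt'_cont, hkt'_vanish⟩⟩
end
end

section
/- Let P and Q be bounded linear operators on L² induced respectively by K⁰-kernels 𝐏 and 𝐐, with Carleman functions 𝐩, 𝐩′ and 𝐪, 𝐪′. Then the convolution 𝐂(s,t) = ∫ 𝐏(s,ξ)𝐐(ξ,t) dξ exists at every point (s,t) ∈ ℝ² and equals ⟨𝐪′(t), 𝐩(s)⟩, the function 𝐂 is a K⁰-kernel inducing the product operator PQ, and its Carleman functions are 𝐜(s) = Q*(𝐩(s)) and 𝐜′(s) = P(𝐪′(s)) for every s ∈ ℝ. -/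
open MeasureTheory Filter Topology ContinuousLinearMap
open scoped ENNReal NNReal

noncomputable section

/-!
Since `𝐏(s,·) = conj 𝐩(s)` and `𝐐(·,t) = 𝐪′(t)` in `L²`, the convolution integral is the `L²`
pairing of `𝐩(s)` with `𝐪′(t)`, and `(PQf)(s) = ⟪𝐩(s), Qf⟫ = ⟪Q*𝐩(s), f⟫`. Everything therefore
reduces to the fact that `Q*` acts by the conjugate transpose kernel, `(Q*g)(t) = ⟪𝐪′(t), g⟫`.
Both sides are compared on indicators of sets of finite measure, where Fubini applies because
`𝐪′`, being continuous and vanishing at infinity, is bounded in `L²`. The new kernel vanishes at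
infinity by Cauchy–Schwarz and the decay of `𝐩` and `𝐪′`.
-/

open scoped InnerProductSpace ComplexConjugate

theorem exists_norm_le_of_tendsto_cocompact {X E : Type*} [TopologicalSpace X]
    [SeminormedAddCommGroup E] {f : X → E} (hc : Continuous f)
    (hv : Tendsto f (cocompact X) (𝓝 0)) : ∃ C, ∀ x, ‖f x‖ ≤ C := by
  obtain ⟨C, hC⟩ := isBounded_iff_forall_norm_le.1
    (ZeroAtInftyContinuousMap.isBounded_range (⟨⟨f, hc⟩, hv⟩ : ZeroAtInftyContinuousMap X E))
  exact ⟨C, fun x => hC _ (Set.mem_range_self x)⟩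

theorem tendsto_inner_cocompact_prod {𝕜 X Y E : Type*} [RCLike 𝕜] [TopologicalSpace X]
    [TopologicalSpace Y] [NormedAddCommGroup E] [InnerProductSpace 𝕜 E] {u : X → E} {v : Y → E}
    {Cu Cv : ℝ} (hu : ∀ x, ‖u x‖ ≤ Cu) (hu0 : Tendsto u (cocompact X) (𝓝 0))
    (hv : ∀ y, ‖v y‖ ≤ Cv) (hv0 : Tendsto v (cocompact Y) (𝓝 0)) :
    Tendsto (fun p : X × Y => ⟪u p.1, v p.2⟫_𝕜) (cocompact (X × Y)) (𝓝 0) := by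
  rw [← Filter.coprod_cocompact, Filter.coprod, tendsto_sup]
  constructor
  · refine squeeze_zero_norm (fun p => (norm_inner_le_norm _ _).trans
      (mul_le_mul_of_nonneg_left (hv p.2) (norm_nonneg _))) ?_
    simpa using ((hu0.comp tendsto_comap).norm.mul_const Cv)
  · refine squeeze_zero_norm (fun p => (norm_inner_le_norm _ _).trans
      (mul_le_mul_of_nonneg_right (hu p.1) (norm_nonneg _))) ?_
    simpa using ((hv0.comp tendsto_comap).norm.const_mul Cu)

namespace MeasureTheory.L2

variable {α 𝕜 : Type*} [MeasurableSpace α] {μ : Measure α} [RCLike 𝕜]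

theorem integral_norm_mul_norm_le {E : Type*} [NormedAddCommGroup E] (f g : Lp E 2 μ) :
    ∫ x, ‖f x‖ * ‖g x‖ ∂μ ≤ ‖f‖ * ‖g‖ := by
  let F : Lp ℝ 2 μ := (Lp.memLp f).norm.toLp _
  let G : Lp ℝ 2 μ := (Lp.memLp g).norm.toLp _
  have hFG : ∫ x, ‖f x‖ * ‖g x‖ ∂μ = ⟪F, G⟫_ℝ := by
    rw [inner_def]
    refine integral_congr_ae ?_
    filter_upwards [MemLp.coeFn_toLp (Lp.memLp f).norm, MemLp.coeFn_toLp (Lp.memLp g).norm]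
      with x hF hG
    simp [F, G, hF, hG, mul_comm]
  have hF : ‖F‖ = ‖f‖ := by rw [Lp.norm_toLp, Lp.norm_def, eLpNorm_norm]
  have hG : ‖G‖ = ‖g‖ := by rw [Lp.norm_toLp, Lp.norm_def, eLpNorm_norm]
  rw [hFG, ← hF, ← hG]
  exact real_inner_le_norm F G

variable {u v : Lp 𝕜 2 μ} {a b : α → 𝕜}

theorem inner_apply_ae_eq_mul (ha : u =ᵐ[μ] fun x => conj (a x)) (hb : v =ᵐ[μ] b) :
    (fun x => ⟪u x, v x⟫_𝕜) =ᵐ[μ] fun x => a x * b x := by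
  filter_upwards [ha, hb] with x hax hbx
  simp [hax, hbx, mul_comm]

theorem integrable_mul_of_ae_eq_conj (ha : u =ᵐ[μ] fun x => conj (a x)) (hb : v =ᵐ[μ] b) :
    Integrable (fun x => a x * b x) μ :=
  (integrable_inner u v).congr (inner_apply_ae_eq_mul ha hb)

theorem integral_mul_eq_inner_of_ae_eq_conj (ha : u =ᵐ[μ] fun x => conj (a x))
    (hb : v =ᵐ[μ] b) : ∫ x, a x * b x ∂μ = ⟪u, v⟫_𝕜 := by
  rw [inner_def]
  exact (integral_congr_ae (inner_apply_ae_eq_mul ha hb)).symm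

end MeasureTheory.L2

section Kernels

variable {T : L2op} {K : ℝ → ℝ → ℂ}

theorem isInducedBy_iff_ae_eq_inner {kt : ℝ → L2}
    (hkt : ∀ s, (kt s : ℝ → ℂ) =ᵐ[volume] fun x => conj (K s x)) :
    IsInducedBy T K ↔ ∀ f : L2, (T f : ℝ → ℂ) =ᵐ[volume] fun s => ⟪kt s, f⟫_ℂ := by
  have key : ∀ (f : L2) s, ∫ t, K s t * (f : ℝ → ℂ) t = ⟪kt s, f⟫_ℂ := fun f s =>
    L2.integral_mul_eq_inner_of_ae_eq_conj (hkt s) (ae_eq_refl _)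
  simp only [IsInducedBy, key]
  rfl

theorem IsInducedBy.indicatorConstLp_ae_eq_setIntegral (hT : IsInducedBy T K) {A : Set ℝ}
    (hA : MeasurableSet A) (hAfin : volume A ≠ ∞) :
    (T (indicatorConstLp 2 hA hAfin (1 : ℂ)) : ℝ → ℂ) =ᵐ[volume] fun ξ => ∫ t in A, K ξ t := by
  filter_upwards [hT (indicatorConstLp 2 hA hAfin 1)] with ξ hξ
  rw [hξ, ← integral_indicator hA]
  refine integral_congr_ae ?_
  filter_upwards [indicatorConstLp_coeFn (p := 2) (hs := hA) (hμs := hAfin) (c := (1 : ℂ))]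
    with t ht
  by_cases h : t ∈ A <;> simp [ht, h]

variable {kt' : ℝ → L2} {C : ℝ}

theorem integrable_prod_conj_transpose_mul (hK : StronglyMeasurable fun p : ℝ × ℝ => K p.1 p.2)
    (hkt' : ∀ t, (kt' t : ℝ → ℂ) =ᵐ[volume] fun x => K x t) (hC : ∀ t, ‖kt' t‖ ≤ C)
    (g : L2) {A : Set ℝ} (hA : volume A ≠ ∞) :
    Integrable (fun p : ℝ × ℝ => conj (K p.2 p.1) * (g : ℝ → ℂ) p.2)
      ((volume.restrict A).prod volume) := by
  have : IsFiniteMeasure (volume.restrict A) := isFiniteMeasure_restrict.2 hA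
  have hmeas : AEStronglyMeasurable (fun p : ℝ × ℝ => conj (K p.2 p.1) * (g : ℝ → ℂ) p.2)
      ((volume.restrict A).prod volume) :=
    (Complex.continuous_conj.comp_stronglyMeasurable
      (hK.comp_measurable measurable_swap)).aestronglyMeasurable.mul
      (Lp.aestronglyMeasurable g).comp_snd
  have hslice : ∀ t, (kt' t : ℝ → ℂ) =ᵐ[volume] fun x => conj (conj (K x t)) := by
    simpa using hkt'
  refine (integrable_prod_iff hmeas).2
    ⟨.of_forall fun t => L2.integrable_mul_of_ae_eq_conj (hslice t) (ae_eq_refl g),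
      (integrable_const (C * ‖g‖)).mono' hmeas.norm.integral_prod_right' (.of_forall fun t => ?_)⟩
  have hnorm : ∫ ξ, ‖conj (K ξ t) * (g : ℝ → ℂ) ξ‖
      = ∫ ξ, ‖(kt' t : ℝ → ℂ) ξ‖ * ‖(g : ℝ → ℂ) ξ‖ := by
    refine integral_congr_ae ?_
    filter_upwards [hkt' t] with ξ hξ
    simp [hξ]
  rw [Real.norm_of_nonneg (integral_nonneg fun _ => norm_nonneg _), hnorm]
  exact (L2.integral_norm_mul_norm_le _ _).trans
    (mul_le_mul_of_nonneg_right (hC t) (norm_nonneg g))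

theorem IsInducedBy.adjoint_ae_eq_inner (hT : IsInducedBy T K)
    (hK : StronglyMeasurable fun p : ℝ × ℝ => K p.1 p.2)
    (hkt' : ∀ t, (kt' t : ℝ → ℂ) =ᵐ[volume] fun x => K x t) (hc : Continuous kt')
    (hC : ∀ t, ‖kt' t‖ ≤ C) (g : L2) :
    (adjoint T g : ℝ → ℂ) =ᵐ[volume] fun t => ⟪kt' t, g⟫_ℂ := by
  have hslice : ∀ t, ⟪kt' t, g⟫_ℂ = ∫ ξ, conj (K ξ t) * (g : ℝ → ℂ) ξ := fun t =>
    (L2.integral_mul_eq_inner_of_ae_eq_conj (by simpa using hkt' t) (ae_eq_refl g)).symm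
  refine ae_eq_of_forall_setIntegral_eq_of_sigmaFinite
    (fun A _ hA => integrableOn_Lp_of_measure_ne_top _ one_le_two hA.ne) (fun A _ hA => ?_) ?_
  · exact Measure.integrableOn_of_bounded hA.ne (hc.inner continuous_const).aestronglyMeasurable
      (.of_forall fun t => (norm_inner_le_norm _ _).trans
        (mul_le_mul_of_nonneg_right (hC t) (norm_nonneg g)))
  intro A hA hAfin
  have hχ := hT.indicatorConstLp_ae_eq_setIntegral hA hAfin.ne
  calc ∫ t in A, (adjoint T g : ℝ → ℂ) t
      = ⟪T (indicatorConstLp 2 hA hAfin.ne 1), g⟫_ℂ := by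
        rw [← adjoint_inner_right, L2.inner_indicatorConstLp_one]
    _ = ∫ ξ, conj (∫ t in A, K ξ t) * (g : ℝ → ℂ) ξ :=
        (L2.integral_mul_eq_inner_of_ae_eq_conj (by simpa using hχ) (ae_eq_refl g)).symm
    _ = ∫ ξ, ∫ t in A, conj (K ξ t) * (g : ℝ → ℂ) ξ := by
        simp only [integral_mul_const, integral_conj]
    _ = ∫ t in A, ⟪kt' t, g⟫_ℂ := by
        simp only [hslice]
        exact (integral_integral_swap
          (integrable_prod_conj_transpose_mul hK hkt' hC g hAfin.ne)).symm

end Kernels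

theorem statement17 (P Q : L2op) (PK QK : ℝ → ℝ → ℂ)
    (pt pt' qt qt' : ℝ → L2)
    (hPK : IsK0Kernel PK pt pt') (hQK : IsK0Kernel QK qt qt')
    (hP : IsInducedBy P PK) (hQ : IsInducedBy Q QK) :
    (∀ s t : ℝ, Integrable (fun x : ℝ => PK s x * QK x t) volume ∧
        ∫ x : ℝ, PK s x * QK x t = (inner ℂ (pt s) (qt' t) : ℂ)) ∧
    IsK0Kernel (fun s t => (inner ℂ (pt s) (qt' t) : ℂ))
        (fun s => (adjoint Q) (pt s)) (fun s => P (qt' s)) ∧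
    IsInducedBy (P * Q) (fun s t => (inner ℂ (pt s) (qt' t) : ℂ)) := by
  obtain ⟨Mp, hMp⟩ := exists_norm_le_of_tendsto_cocompact hPK.cont_t hPK.vanish_t
  obtain ⟨Mq, hMq⟩ := exists_norm_le_of_tendsto_cocompact hQK.cont_t' hQK.vanish_t'
  have hPinner := (isInducedBy_iff_ae_eq_inner hPK.repr_t).1 hP
  have hc : ∀ s, (adjoint Q (pt s) : ℝ → ℂ) =ᵐ[volume]
      fun t => conj ⟪pt s, qt' t⟫_ℂ := fun s => by
    filter_upwards [hQ.adjoint_ae_eq_inner hQK.cont.stronglyMeasurable hQK.repr_t' hQK.cont_t'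
      hMq (pt s)] with t ht
    rw [ht, inner_conj_symm]
  refine ⟨fun s t => ⟨L2.integrable_mul_of_ae_eq_conj (hPK.repr_t s) (hQK.repr_t' t),
    L2.integral_mul_eq_inner_of_ae_eq_conj (hPK.repr_t s) (hQK.repr_t' t)⟩,
    ⟨hc, fun t => hPinner (qt' t),
      (hPK.cont_t.comp continuous_fst).inner (hQK.cont_t'.comp continuous_snd),
      tendsto_inner_cocompact_prod hMp hPK.vanish_t hMq hQK.vanish_t',
      (adjoint Q).continuous.comp hPK.cont_t,
      by simpa [Function.comp_def] using ((adjoint Q).continuous.tendsto 0).comp hPK.vanish_t,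
      P.continuous.comp hQK.cont_t',
      by simpa [Function.comp_def] using (P.continuous.tendsto 0).comp hQK.vanish_t'⟩, ?_⟩
  refine (isInducedBy_iff_ae_eq_inner hc).2 fun f => ?_
  filter_upwards [hPinner (Q f)] with s hs
  rw [mul_apply_eq_comp, hs, adjoint_inner_left]
end
end

section
/- Let T be a bounded linear operator on L² induced by a K⁰-kernel 𝐓 satisfying condition (iv), with subkernel operators Tₙ = PₙT and T̃ₙ = PₙTPₙ. Then for each fixed n ∈ ℕ: Π(Tₙ) = Π(T̃ₙ), and for every λ ∈ Π(Tₙ) the resolvent kernels satisfy 𝐓̃_{n|λ}(s,t) = χₙ(t)·𝐓_{n|λ}(s,t) for all s, t ∈ ℝ, where 𝐓_{n|λ} (resp. 𝐓̃_{n|λ}) denotes the unique K⁰-kernel inducing the Fredholm resolvent Tₙ R_λ(Tₙ) (resp. T̃ₙ R_λ(T̃ₙ)). -/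
/-!
Write `Q = Pₙ`, an idempotent. Since `1 - xy` is a unit iff `1 - yx` is, `1 - λQTQ` and
`1 - λQT` are invertible together, and the intertwining `Q (1 - λQTQ) = (1 - λQT) Q` gives
`T̃_{n|λ} = T_{n|λ} Q`. Testing both kernels against `f ∈ L²` then shows that the Carleman
function of `𝐓̃_{n|λ}` at `s` is `Q` applied to that of `𝐓_{n|λ}` (both are continuous in `s`, so
a.e. equality in `s` suffices), i.e. `𝐓̃_{n|λ}(s,t) = χₙ(t) 𝐓_{n|λ}(s,t)` for a.e. `t`. Both kernels
are continuous in `t`, and on each side of a jump of `χₙ` the factor is constant, so the identity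
extends to the closures of these open pieces, which cover `ℝ`.
-/

open MeasureTheory Filter Topology ContinuousLinearMap
open scoped ENNReal NNReal

noncomputable section

section Ring

variable {R : Type*} [Ring R]

theorem isUnit_one_sub_mul_comm (a b : R) : IsUnit (1 - a * b) ↔ IsUnit (1 - b * a) := by
  -- over `ℤ`, `1 ∈ σ (a * b)` says that `1 - a * b` is not a unit
  simpa [spectrum.mem_iff] using
    (not_congr (spectrum.unit_mem_mul_comm (R := ℤ) (a := a) (b := b) (r := 1)))

theorem IsIdempotentElem.isUnit_one_sub_mul_mul_iff {p : R} (hp : IsIdempotentElem p) (a : R) :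
    IsUnit (1 - p * a * p) ↔ IsUnit (1 - p * a) := by
  rw [mul_assoc, isUnit_one_sub_mul_comm, mul_assoc, hp.eq, isUnit_one_sub_mul_comm]

theorem IsIdempotentElem.mul_inverse_one_sub_mul_mul {p : R} (hp : IsIdempotentElem p) (a : R) :
    p * Ring.inverse (1 - p * a * p) = Ring.inverse (1 - p * a) * p := by
  by_cases h : IsUnit (1 - p * a)
  · have h' := (hp.isUnit_one_sub_mul_mul_iff a).2 h
    have intertwine : p * (1 - p * a * p) = (1 - p * a) * p := by
      simp only [mul_sub, sub_mul, mul_one, one_mul, ← mul_assoc, hp.eq]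
    rw [eq_comm, Ring.inverse_mul_eq_iff_eq_mul _ _ _ h, ← mul_assoc, ← intertwine, mul_assoc,
      Ring.mul_inverse_cancel _ h', mul_one]
  · have h' := mt (hp.isUnit_one_sub_mul_mul_iff a).1 h
    rw [Ring.inverse_non_unit _ h, Ring.inverse_non_unit _ h', mul_zero, zero_mul]

end Ring

theorem smul_mul_mul_eq_mul_smul_mul (lam : ℂ) (P T : L2op) :
    lam • (P * T * P) = P * (lam • T) * P := by
  rw [← smul_mul_assoc, ← mul_smul_comm]

theorem regularSet_mul_mul_eq {P : L2op} (hP : IsIdempotentElem P) (T : L2op) :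
    regularSet (P * T * P) = regularSet (P * T) := by
  ext lam
  simp only [regularSet, Set.mem_ofPred_eq]
  rw [smul_mul_mul_eq_mul_smul_mul, ← mul_smul_comm]
  exact hP.isUnit_one_sub_mul_mul_iff _

theorem fres_mul_mul_eq {P : L2op} (hP : IsIdempotentElem P) (T : L2op) (lam : ℂ) :
    fres (P * T * P) lam = fres (P * T) lam * P := by
  rw [fres, fres, res, res, smul_mul_mul_eq_mul_smul_mul, ← mul_smul_comm, mul_assoc,
    hP.mul_inverse_one_sub_mul_mul, ← mul_assoc]

@[simp]
theorem chi_mul_self (τ x : ℝ) : chi τ x * chi τ x = chi τ x := by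
  by_cases h : x ∈ Set.Ioo (-τ) τ <;> simp [chi, h]

@[simp]
theorem conj_chi (τ x : ℝ) : starRingEnd ℂ (chi τ x) = chi τ x := by
  by_cases h : x ∈ Set.Ioo (-τ) τ <;> simp [chi, h]

theorem eq_chi_mul_of_ae_eq {τ : ℝ} {g h : ℝ → ℂ} (hg : Continuous g) (hh : Continuous h)
    (hgh : ∀ᵐ x, g x = chi τ x * h x) (t : ℝ) : g t = chi τ t * h t := by
  have eqOn_closure (U : Set ℝ) (hU : IsOpen U) (c : ℂ) (hc : ∀ x ∈ U, chi τ x = c) :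
      Set.EqOn g (fun x => c * h x) (closure U) := by
    have hch : Continuous fun x => c * h x := continuous_const.mul hh
    refine (Measure.eqOn_open_of_ae_eq (μ := volume) ?_ hU hg.continuousOn
      hch.continuousOn).closure hg hch
    filter_upwards [ae_restrict_of_ae hgh, ae_restrict_mem hU.measurableSet] with x hx hxU
    rw [hx, hc x hxU]
  by_cases ht : t ∈ Set.Ioo (-τ) τ
  · simpa [chi, ht] using
      eqOn_closure _ isOpen_Ioo 1 (fun x hx => by simp [chi, hx]) (subset_closure ht)
  · have ht' : t ∈ closure (Set.Iio (-τ) ∪ Set.Ioi τ) := by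
      rw [closure_union, closure_Iio, closure_Ioi]
      simp only [Set.mem_Ioo, not_and_or, not_lt] at ht
      exact ht
    have hc : ∀ x ∈ Set.Iio (-τ) ∪ Set.Ioi τ, chi τ x = 0 := by
      rintro x (hx | hx)
      · simp [chi, (Set.mem_Iio.1 hx).le]
      · simp [chi, (Set.mem_Ioi.1 hx).le]
    simpa [chi, ht] using eqOn_closure _ (isOpen_Iio.union isOpen_Ioi) 0 hc ht'

section ChiMul

variable {τ : ℝ} {Q : L2op}

theorem isIdempotentElem_of_ae_eq_chi_mul
    (hQ : ∀ f : L2, (Q f : ℝ → ℂ) =ᵐ[volume] fun x => chi τ x * (f : ℝ → ℂ) x) :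
    IsIdempotentElem Q := by
  refine ContinuousLinearMap.ext fun f => Lp.ext ?_
  filter_upwards [hQ (Q f), hQ f] with x hQQf hQf
  rw [mul_apply_eq_comp, hQQf, hQf, ← mul_assoc, chi_mul_self]

theorem isSelfAdjoint_of_ae_eq_chi_mul
    (hQ : ∀ f : L2, (Q f : ℝ → ℂ) =ᵐ[volume] fun x => chi τ x * (f : ℝ → ℂ) x) :
    IsSelfAdjoint Q := by
  rw [ContinuousLinearMap.isSelfAdjoint_iff_isSymmetric]
  intro g f
  simp only [ContinuousLinearMap.coe_coe, L2.inner_def]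
  refine integral_congr_ae ?_
  filter_upwards [hQ g, hQ f] with x hg hf
  simp only [RCLike.inner_apply, hg, hf, map_mul, conj_chi]
  ring

end ChiMul

namespace IsK0Kernel

variable {A B : ℝ → ℝ → ℂ} {at1 at2 bt1 bt2 : ℝ → L2}

theorem continuous_right (hA : IsK0Kernel A at1 at2) (s : ℝ) : Continuous (A s) :=
  hA.cont.comp (Continuous.prodMk_right s)

theorem integral_mul_eq_inner (hA : IsK0Kernel A at1 at2) (s : ℝ) (f : L2) :
    ∫ t, A s t * (f : ℝ → ℂ) t = inner ℂ (at1 s) f := by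
  rw [L2.inner_def]
  refine integral_congr_ae ?_
  filter_upwards [hA.repr_t s] with x hx
  rw [RCLike.inner_apply, hx, Complex.conj_conj, mul_comm]

theorem carleman_eq_adjoint_of_isInducedBy_mul (hA : IsK0Kernel A at1 at2)
    (hB : IsK0Kernel B bt1 bt2) {S Q : L2op} (hSA : IsInducedBy S A)
    (hSB : IsInducedBy (S * Q) B) (s : ℝ) : bt1 s = adjoint Q (at1 s) := by
  have inner_eq (f : L2) :
      (fun r => inner ℂ (bt1 r) f) = fun r => inner ℂ (adjoint Q (at1 r)) f := by
    refine ((hB.cont_t.inner continuous_const).ae_eq_iff_eq volume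
      (((adjoint Q).continuous.comp hA.cont_t).inner continuous_const)).1 ?_
    filter_upwards [hSB f, hSA (Q f)] with r hSBf hSAf
    rw [← hB.integral_mul_eq_inner, ← hSBf, mul_apply_eq_comp, hSAf, hA.integral_mul_eq_inner,
      Function.comp_apply, adjoint_inner_left]
  exact ext_inner_right ℂ fun f => congrFun (inner_eq f) s

theorem eq_chi_mul_of_isInducedBy_mul (hA : IsK0Kernel A at1 at2) (hB : IsK0Kernel B bt1 bt2)
    {τ : ℝ} {S Q : L2op}
    (hQ : ∀ f : L2, (Q f : ℝ → ℂ) =ᵐ[volume] fun x => chi τ x * (f : ℝ → ℂ) x)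
    (hSA : IsInducedBy S A) (hSB : IsInducedBy (S * Q) B) (s t : ℝ) :
    B s t = chi τ t * A s t := by
  have hbt : bt1 s = Q (at1 s) := by
    rw [hA.carleman_eq_adjoint_of_isInducedBy_mul hB hSA hSB,
      isSelfAdjoint_iff'.1 (isSelfAdjoint_of_ae_eq_chi_mul hQ)]
  refine eq_chi_mul_of_ae_eq (hB.continuous_right s) (hA.continuous_right s) ?_ t
  filter_upwards [hB.repr_t s, hA.repr_t s, hQ (at1 s)] with x hBx hAx hQx
  apply (starRingEnd ℂ).injective
  rw [← hBx, hbt, hQx, hAx, map_mul, conj_chi]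

end IsK0Kernel

theorem statement19_general (T : L2op) (K : ℝ → ℝ → ℂ)
    (tau : ℕ → ℝ) (P : ℕ → L2op) (hiv : ConditionIV K T tau P) (n : ℕ) :
    regularSet (P n * T) = regularSet (P n * T * P n) ∧
    ∀ lam ∈ regularSet (P n * T),
      ∀ (A B : ℝ → ℝ → ℂ) (at1 at2 bt1 bt2 : ℝ → L2),
        IsK0Kernel A at1 at2 → IsInducedBy (fres (P n * T) lam) A →
        IsK0Kernel B bt1 bt2 → IsInducedBy (fres (P n * T * P n) lam) B →
        ∀ s t : ℝ, B s t = chi (tau n) t * A s t := by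
  have hP : IsIdempotentElem (P n) := isIdempotentElem_of_ae_eq_chi_mul (hiv.proj n)
  refine ⟨(regularSet_mul_mul_eq hP T).symm, fun lam _ A B _ _ _ _ hA hSA hB hSB => ?_⟩
  rw [fres_mul_mul_eq hP] at hSB
  exact hA.eq_chi_mul_of_isInducedBy_mul hB (hiv.proj n) hSA hSB

theorem statement19 (T : L2op) (K : ℝ → ℝ → ℂ) (kt kt' : ℝ → L2)
    (hK : IsK0Kernel K kt kt') (hT : IsInducedBy T K)
    (tau : ℕ → ℝ) (P : ℕ → L2op) (hiv : ConditionIV K T tau P) (n : ℕ) :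
    regularSet (P n * T) = regularSet (P n * T * P n) ∧
    ∀ lam ∈ regularSet (P n * T),
      ∀ (A B : ℝ → ℝ → ℂ) (at1 at2 bt1 bt2 : ℝ → L2),
        IsK0Kernel A at1 at2 → IsInducedBy (fres (P n * T) lam) A →
        IsK0Kernel B bt1 bt2 → IsInducedBy (fres (P n * T * P n) lam) B →
        ∀ s t : ℝ, B s t = chi (tau n) t * A s t :=
  statement19_general T K tau P hiv n
end
end
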